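/- Let g : (0,∞) → ℝ with g(z) ≥ 0 for all z > 0, and let ψ, φ : (0,∞) → ℝ be twice differentiable solutions of the ODE u''(z) + z(1 − 2g(z))u'(z) − u(z) = 0 on (0,∞) satisfying ψ(z) > 0, φ(z) > 0, ψ'(z) ≥ 0, and φ'(z) ≤ 0 for all z > 0. Define p(z) := (z ψ'(z) − ψ(z)) / (z φ'(z) − φ(z)) for z > 0 (the denominator z φ'(z) − φ(z) is strictly negative, hence nonzero, for all z > 0). Then p is differentiable on (0,∞) with p'(z) = 2 z² g(z) ( φ'(z)ψ(z) − φ(z)ψ'(z) ) / ( z φ'(z) − φ(z) )², and p'(z) ≤ 0 for all z > 0; in particular p is nonincreasing on (0,∞). -/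

import Mathlib

open Filter Set Topology

/-! Writing `N = zψ' − ψ` and `D = zφ' − φ`, one has `N' = zψ''` and `D' = zφ''`, and for solutions
of `u'' + b u' − u = 0` the quotient rule collapses to `(N/D)' = z (z − b) (φ'ψ − φψ') / D²`.
With `b = z(1 − 2g)` the factor `z − b = 2zg` is nonnegative, while the sign conditions on
`ψ, φ` make the Wronskian-type term `φ'ψ − φψ'` nonpositive. -/

theorem hasDerivAt_mul_deriv_sub {u u' : ℝ → ℝ} {u'' z : ℝ}
    (hu : HasDerivAt u (u' z) z) (hu' : HasDerivAt u' u'' z) :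
    HasDerivAt (fun x => x * u' x - u x) (z * u'') z := by
  refine (((hasDerivAt_id z).mul hu').sub hu).congr_deriv ?_
  simp only [id_eq, one_mul, add_sub_cancel_left]

theorem mul_deriv_sub_neg {u u' : ℝ → ℝ} {z : ℝ} (hz : 0 < z) (hu : 0 < u z) (hu' : u' z ≤ 0) :
    z * u' z - u z < 0 := by
  nlinarith

theorem hasDerivAt_div_mul_deriv_sub_of_ode {ψ ψ' φ φ' : ℝ → ℝ} {ψ'' φ'' b z : ℝ}
    (hψ : HasDerivAt ψ (ψ' z) z) (hψ' : HasDerivAt ψ' ψ'' z)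
    (hψode : ψ'' + b * ψ' z - ψ z = 0)
    (hφ : HasDerivAt φ (φ' z) z) (hφ' : HasDerivAt φ' φ'' z)
    (hφode : φ'' + b * φ' z - φ z = 0)
    (hD : z * φ' z - φ z ≠ 0) :
    HasDerivAt (fun x => (x * ψ' x - ψ x) / (x * φ' x - φ x))
      (z * (z - b) * (φ' z * ψ z - φ z * ψ' z) / (z * φ' z - φ z) ^ 2) z := by
  refine ((hasDerivAt_mul_deriv_sub hψ hψ').div (hasDerivAt_mul_deriv_sub hφ hφ') hD).congr_deriv
    ?_
  rw [show ψ'' = ψ z - b * ψ' z by linarith, show φ'' = φ z - b * φ' z by linarith]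
  ring

theorem ratio_p_antitone
    (g ψ ψ' ψ'' φ φ' φ'' : ℝ → ℝ)
    (hg : ∀ z : ℝ, 0 < z → 0 ≤ g z)
    (hψd : ∀ z : ℝ, 0 < z → HasDerivAt ψ (ψ' z) z)
    (hψd2 : ∀ z : ℝ, 0 < z → HasDerivAt ψ' (ψ'' z) z)
    (hψode : ∀ z : ℝ, 0 < z → ψ'' z + z * (1 - 2 * g z) * ψ' z - ψ z = 0)
    (hψpos : ∀ z : ℝ, 0 < z → 0 < ψ z)
    (hψinc : ∀ z : ℝ, 0 < z → 0 ≤ ψ' z)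
    (hφd : ∀ z : ℝ, 0 < z → HasDerivAt φ (φ' z) z)
    (hφd2 : ∀ z : ℝ, 0 < z → HasDerivAt φ' (φ'' z) z)
    (hφode : ∀ z : ℝ, 0 < z → φ'' z + z * (1 - 2 * g z) * φ' z - φ z = 0)
    (hφpos : ∀ z : ℝ, 0 < z → 0 < φ z)
    (hφdec : ∀ z : ℝ, 0 < z → φ' z ≤ 0)
    (p : ℝ → ℝ)
    (hp : ∀ z : ℝ, 0 < z → p z = (z * ψ' z - ψ z) / (z * φ' z - φ z)) :
    (∀ z : ℝ, 0 < z → z * φ' z - φ z < 0) ∧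
    (∀ z : ℝ, 0 < z → HasDerivAt p
      (2 * z ^ 2 * g z * (φ' z * ψ z - φ z * ψ' z) / (z * φ' z - φ z) ^ 2) z) ∧
    (∀ z : ℝ, 0 < z →
      2 * z ^ 2 * g z * (φ' z * ψ z - φ z * ψ' z) / (z * φ' z - φ z) ^ 2 ≤ 0) ∧
    AntitoneOn p (Set.Ioi 0) := by
  have hden (z : ℝ) (hz : 0 < z) : z * φ' z - φ z < 0 :=
    mul_deriv_sub_neg hz (hφpos z hz) (hφdec z hz)
  have hderiv (z : ℝ) (hz : 0 < z) : HasDerivAt p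
      (2 * z ^ 2 * g z * (φ' z * ψ z - φ z * ψ' z) / (z * φ' z - φ z) ^ 2) z := by
    have hp_near : (fun x => (x * ψ' x - ψ x) / (x * φ' x - φ x)) =ᶠ[𝓝 z] p :=
      (eventually_gt_nhds hz).mono fun x hx => (hp x hx).symm
    refine ((hasDerivAt_div_mul_deriv_sub_of_ode (hψd z hz) (hψd2 z hz) (hψode z hz)
      (hφd z hz) (hφd2 z hz) (hφode z hz) (hden z hz).ne).congr_of_eventuallyEq
        hp_near.symm).congr_deriv ?_
    ring
  have hnonpos (z : ℝ) (hz : 0 < z) :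
      2 * z ^ 2 * g z * (φ' z * ψ z - φ z * ψ' z) / (z * φ' z - φ z) ^ 2 ≤ 0 := by
    have hwronskian : φ' z * ψ z - φ z * ψ' z ≤ 0 := by
      nlinarith [hφdec z hz, hψpos z hz, hφpos z hz, hψinc z hz]
    have hfactor : 0 ≤ 2 * z ^ 2 * g z := mul_nonneg (by positivity) (hg z hz)
    exact div_nonpos_of_nonpos_of_nonneg (mul_nonpos_of_nonneg_of_nonpos hfactor hwronskian)
      (sq_nonneg _)
  refine ⟨hden, hderiv, hnonpos, ?_⟩
  refine antitoneOn_of_deriv_nonpos (convex_Ioi 0)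
    (fun z hz => (hderiv z hz).continuousAt.continuousWithinAt) (fun z hz => ?_) (fun z hz => ?_)
  all_goals rw [interior_Ioi] at hz
  · exact (hderiv z hz).differentiableAt.differentiableWithinAt
  · exact (hderiv z hz).deriv ▸ hnonpos z hz
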